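/- For 0 < α < 1, the function a₁(α,y) := α·log(α√y + √(y-1+α²)) - log(√y + √(y-1+α²)) - (α/2)·log(1-y) + ((1-α)/2)·log(1-α²), defined for 1-α² < y < 1, satisfies lim_{y→(1-α²)⁺} a₁(α,y) = 0 and lim_{y→(1-α²)⁺} a₁(α,y)/(y-1+α²)^{3/2} = 1/(3α²√(1-α²)). -/

import Mathlib

open Filter Set

/-- a₁(α,y) = α log(α√y + √(y-1+α²)) - log(√y + √(y-1+α²)) - (α/2) log(1-y)
    + ((1-α)/2) log(1-α²). -/
noncomputable def a1 (α y : ℝ) : ℝ :=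
  α * Real.log (α * Real.sqrt y + Real.sqrt (y - 1 + α ^ 2)) -
    Real.log (Real.sqrt y + Real.sqrt (y - 1 + α ^ 2)) -
    (α / 2) * Real.log (1 - y) + ((1 - α) / 2) * Real.log (1 - α ^ 2)

/-!
With c = 1 - α², the function a₁(α, ·) is continuous at c and vanishes there. On (c, 1) its
derivative collapses to √(y - c) / (2√y (1 - y)); dividing by the derivative (3/2)√(y - c) of
(y - c)^{3/2} leaves 1 / (3√y (1 - y)), which tends to 1 / (3α²√c) as y → c, so L'Hôpital's rule
gives the second limit.
-/

open Real Topology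

theorem a1_one_sub_sq {α : ℝ} (hα : α ≠ 0) (hc : 0 < 1 - α ^ 2) : a1 α (1 - α ^ 2) = 0 := by
  have hs : √(1 - α ^ 2) ≠ 0 := (sqrt_pos.mpr hc).ne'
  rw [a1, show 1 - α ^ 2 - 1 + α ^ 2 = 0 by ring, sub_sub_cancel, sqrt_zero, add_zero, add_zero,
    log_mul hα hs, log_sqrt hc.le, log_pow]
  push_cast
  ring

theorem continuousAt_a1 {α : ℝ} (hα : α ≠ 0) (hc : 0 < 1 - α ^ 2) :
    ContinuousAt (a1 α) (1 - α ^ 2) := by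
  have hs : 0 < √(1 - α ^ 2) := sqrt_pos.mpr hc
  unfold a1
  fun_prop (disch := simp [hα, hs.ne'])

theorem hasDerivAt_a1 {α y : ℝ} (hα : 0 ≤ α) (hy0 : 0 < y) (hy : 1 - α ^ 2 < y) (hy1 : y ≠ 1) :
    HasDerivAt (a1 α) (√(y - 1 + α ^ 2) / (2 * √y * (1 - y))) y := by
  set u := √y with hu_def
  set v := √(y - 1 + α ^ 2) with hv_def
  have hu : 0 < u := sqrt_pos.mpr hy0
  have hv : 0 < v := sqrt_pos.mpr (by linarith)
  have hu2 : u ^ 2 = y := sq_sqrt hy0.le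
  have hv2 : v ^ 2 = y - 1 + α ^ 2 := sq_sqrt (by linarith)
  have du : HasDerivAt (√·) (1 / (2 * u)) y := hasDerivAt_sqrt hy0.ne'
  have dv : HasDerivAt (fun y => √(y - 1 + α ^ 2)) (1 / (2 * v)) y :=
    (((hasDerivAt_id y).sub_const 1).add_const (α ^ 2)).sqrt (by simp; linarith)
  have h1 : α * u + v ≠ 0 := by positivity
  have h2 : u + v ≠ 0 := by positivity
  have h3 : 1 - y ≠ 0 := sub_ne_zero.mpr hy1.symm
  have := ((((du.const_mul α).add dv).log h1).const_mul α |>.sub ((du.add dv).log h2) |>.sub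
    ((((hasDerivAt_id y).const_sub 1).log h3).const_mul (α / 2))).add_const
    ((1 - α) / 2 * log (1 - α ^ 2))
  refine this.congr_deriv ?_
  simp only [Pi.add_apply, id, ← hu_def, ← hv_def]
  field_simp
  linear_combination (u + v) * v * (α ^ 2 * hu2 - hv2)

theorem hasDerivAt_rpow_three_halves (x : ℝ) :
    HasDerivAt (fun x => x ^ (3 / 2 : ℝ)) (3 / 2 * √x) x := by
  convert hasDerivAt_rpow_const (x := x) (p := 3 / 2) (Or.inr (by norm_num)) using 2
  rw [sqrt_eq_rpow]
  norm_num

theorem tendsto_one_div_three_sqrt_mul_one_sub {α : ℝ} (hα : α ≠ 0) (hc : 0 < 1 - α ^ 2) :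
    Tendsto (fun y => 1 / (3 * √y * (1 - y))) (𝓝 (1 - α ^ 2))
      (𝓝 (1 / (3 * α ^ 2 * √(1 - α ^ 2)))) := by
  have : 3 * √(1 - α ^ 2) * (1 - (1 - α ^ 2)) ≠ 0 := by
    rw [sub_sub_cancel]
    exact mul_ne_zero (mul_ne_zero three_ne_zero (sqrt_pos.mpr hc).ne') (pow_ne_zero 2 hα)
  convert (by fun_prop (disch := assumption) :
    ContinuousAt (fun y => 1 / (3 * √y * (1 - y))) (1 - α ^ 2)).tendsto using 2
  ring

theorem a1_vanishing_and_expansion (α : ℝ) (hα0 : 0 < α) (hα1 : α < 1) :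
    Tendsto (a1 α) (nhdsWithin (1 - α ^ 2) (Ioi (1 - α ^ 2))) (nhds 0) ∧
    Tendsto (fun y => a1 α y / (y - 1 + α ^ 2) ^ ((3 : ℝ) / 2))
      (nhdsWithin (1 - α ^ 2) (Ioi (1 - α ^ 2)))
      (nhds (1 / (3 * α ^ 2 * Real.sqrt (1 - α ^ 2)))) := by
  have hc : 0 < 1 - α ^ 2 := by nlinarith
  have hf : Tendsto (a1 α) (𝓝[>] (1 - α ^ 2)) (𝓝 0) := by
    simpa [a1_one_sub_sq hα0.ne' hc] using
      tendsto_nhdsWithin_of_tendsto_nhds (continuousAt_a1 hα0.ne' hc).tendsto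
  have hg' (y : ℝ) : HasDerivAt (fun y => (y - 1 + α ^ 2) ^ (3 / 2 : ℝ))
      (3 / 2 * √(y - 1 + α ^ 2)) y :=
    ((hasDerivAt_rpow_three_halves _).comp y
      (((hasDerivAt_id' y).sub_const 1).add_const (α ^ 2))).congr_deriv (mul_one _)
  have hg : Tendsto (fun y => (y - 1 + α ^ 2) ^ (3 / 2 : ℝ)) (𝓝[>] (1 - α ^ 2)) (𝓝 0) := by
    have := tendsto_nhdsWithin_of_tendsto_nhds (s := Ioi (1 - α ^ 2))
      (hg' (1 - α ^ 2)).continuousAt.tendsto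
    rwa [sub_sub_cancel_left, neg_add_cancel, zero_rpow (by norm_num)] at this
  refine ⟨hf, HasDerivAt.lhopital_zero_right_on_Ioo (b := 1) (sub_lt_self 1 (by positivity))
    (fun y hy => hasDerivAt_a1 hα0.le (hc.trans hy.1) hy.1 hy.2.ne) (fun y _ => hg' y)
    (fun y hy => ?_) hf hg
    ((tendsto_one_div_three_sqrt_mul_one_sub hα0.ne' hc).mono_left nhdsWithin_le_nhds |>.congr' ?_)⟩
  · have : 0 < y - 1 + α ^ 2 := by linarith [hy.1]
    positivity
  · filter_upwards [self_mem_nhdsWithin] with y (hy : 1 - α ^ 2 < y)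
    have : √(y - 1 + α ^ 2) ≠ 0 := (sqrt_pos.mpr (by linarith)).ne'
    field_simp
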